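/- Key estimate relating the drift to the exclusion Dirichlet form: there is a constant K > 0, depending only on d, R, l, ρ and the kernel p, such that for every bounded measurable (local) f : Ω → R, |⟨φ·l, f⟩_{ν_ρ}| ≤ K · D_se(f)^{1/2}, where φ(η) = Σ_{|y|_1 ≤ R} y η(0)η(y), l ∈ R^d, and D_se is the Dirichlet form of the symmetric exclusion generator with kernel p. -/

import Mathlib

open MeasureTheory

noncomputable section

namespace SEPRC

/-- The lattice `ℤ^d`. -/
abbrev Zd (d : ℕ) := Fin d → ℤ

/-- The configuration space `Ω = {0,1}^{ℤ^d}`. -/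
abbrev Cfg (d : ℕ) := Zd d → Bool

/-- Occupation variable as a real number. -/
def ind : Bool → ℝ := fun b => if b then 1 else 0

/-- The ℓ¹ norm on `ℤ^d`. -/
def l1 {d : ℕ} (y : Zd d) : ℕ := ∑ i, (y i).natAbs

/-- The shift `(τ_y η)(x) = η(x + y)`. -/
def shift {d : ℕ} (y : Zd d) (η : Cfg d) : Cfg d := fun x => η (x + y)

/-- The configuration `η^{u,v}` with the occupation variables at `u` and `v` exchanged. -/
def swap {d : ℕ} (u v : Zd d) (η : Cfg d) : Cfg d :=
  fun x => if x = u then η v else if x = v then η u else η x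

/-- `ν` is the Bernoulli product measure of density `ρ` on `{0,1}^{ℤ^d}`. -/
def IsBernoulliProduct (d : ℕ) (ρ : ℝ) (ν : Measure (Cfg d)) : Prop :=
  IsProbabilityMeasure ν ∧
  ∀ (S : Finset (Zd d)) (a : Zd d → Bool),
    ν {η | ∀ z ∈ S, η z = a z} =
      ∏ z ∈ S, ENNReal.ofReal (if a z then ρ else 1 - ρ)

/-- A cylinder (local) function: it depends on finitely many coordinates. -/
def IsCylinder {d : ℕ} (f : Cfg d → ℝ) : Prop :=
  ∃ Λ : Finset (Zd d), ∀ η η' : Cfg d, (∀ x ∈ Λ, η x = η' x) → f η = f η'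

/-!
Write `c y = y · l` and `J y = ∫ η(0) η(y) f dν`. Since `c` is odd and `B = -B`, the pairing
`⟨φ · l, f⟩ = ∑ c y J y` equals `½ ∑ c y (J y - J (-y))`. Exchanging the sites `-y` and `y`
preserves `ν`, fixes `0` and carries `η(-y)` to `η(y)`, so `J (-y) - J y` is the integral of
`η(0) η(y) (f(η^{-y,y}) - f(η))`, which is at most the `L²` norm of `f(η^{-y,y}) - f(η)`.
The long exchange factors as `(-y 0)(0 y)(-y 0)`, and both `(-y 0)` and `(0 y)` carry kernel
weight `p y > 0` in `D_se`, so that squared norm is at most `20 D_se(f) / p y`. Locality of `f`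
makes the Dirichlet series a finite sum, so it dominates each of its terms.
-/

section Pi

variable {ι α : Type*}

def pointCylinders (ι α : Type*) : Set (Set (ι → α)) :=
  {s | ∃ (S : Finset ι) (a : ι → α), s = {η | ∀ z ∈ S, η z = a z}}

lemma setOf_forall_eq_eq_of_mem {S : Finset ι} {a η₀ : ι → α}
    (h : η₀ ∈ {η : ι → α | ∀ z ∈ S, η z = a z}) :
    {η : ι → α | ∀ z ∈ S, η z = a z} = {η | ∀ z ∈ S, η z = η₀ z} := by
  ext η
  exact forall₂_congr fun z hz => by rw [h z hz]

lemma isPiSystem_pointCylinders : IsPiSystem (pointCylinders ι α) := by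
  classical
  rintro _ ⟨S, a, rfl⟩ _ ⟨T, b, rfl⟩ ⟨η₀, hS, hT⟩
  refine ⟨S ∪ T, η₀, ?_⟩
  rw [setOf_forall_eq_eq_of_mem hS, setOf_forall_eq_eq_of_mem hT]
  ext η
  simp only [Set.mem_inter_iff, Set.mem_ofPred_eq, Finset.mem_union, or_imp, forall_and]

lemma measurableSet_setOf_forall_eq [MeasurableSpace α] [MeasurableSingletonClass α]
    (S : Finset ι) (a : ι → α) : MeasurableSet {η : ι → α | ∀ z ∈ S, η z = a z} := by
  have : {η : ι → α | ∀ z ∈ S, η z = a z} = (S : Set ι).pi fun z => {a z} := by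
    ext η; simp
  rw [this]
  exact MeasurableSet.pi S.countable_toSet fun z _ => measurableSet_singleton (a z)

lemma generateFrom_pointCylinders [MeasurableSpace α] [Countable α] [MeasurableSingletonClass α] :
    MeasurableSpace.generateFrom (pointCylinders ι α) = MeasurableSpace.pi := by
  apply le_antisymm
  · apply MeasurableSpace.generateFrom_le
    rintro _ ⟨S, a, rfl⟩
    exact measurableSet_setOf_forall_eq S a
  · refine iSup_le fun z => Measurable.comap_le ?_
    refine @measurable_to_countable' _ _ _ _ (.generateFrom _) _ fun b => ?_
    exact MeasurableSpace.measurableSet_generateFrom ⟨{z}, fun _ => b, by ext η; simp⟩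

theorem Measure.ext_of_pointCylinders [MeasurableSpace α] [Countable α] [MeasurableSingletonClass α]
    {μ μ' : Measure (ι → α)} [IsFiniteMeasure μ]
    (h : ∀ (S : Finset ι) (a : ι → α),
      μ {η | ∀ z ∈ S, η z = a z} = μ' {η | ∀ z ∈ S, η z = a z}) : μ = μ' := by
  rcases isEmpty_or_nonempty (ι → α) with hempty | ⟨⟨a⟩⟩
  · exact Subsingleton.elim _ _
  refine ext_of_generate_finite _ generateFrom_pointCylinders.symm isPiSystem_pointCylinders
    (by rintro _ ⟨S, a, rfl⟩; exact h S a) ?_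
  simpa using h ∅ a

lemma measurableEmbedding_comp_perm [MeasurableSpace α] (σ : Equiv.Perm ι) :
    MeasurableEmbedding fun η : ι → α => η ∘ σ := by
  convert (MeasurableEquiv.piCongrLeft (fun _ => α) σ).symm.measurableEmbedding using 1
  ext η x
  simp [MeasurableEquiv.piCongrLeft, Equiv.piCongrLeft_symm_apply]

end Pi

section L2

variable {Ω : Type*} [MeasurableSpace Ω] {μ : Measure Ω}

lemma sq_integral_le_integral_sq [IsProbabilityMeasure μ] {h : Ω → ℝ} (hh : MemLp h 2 μ) :
    (∫ x, h x ∂μ) ^ 2 ≤ ∫ x, h x ^ 2 ∂μ := by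
  have := ProbabilityTheory.variance_nonneg h μ
  rw [ProbabilityTheory.variance_eq_sub hh] at this
  simpa using this

lemma abs_integral_mul_le_sqrt_integral_sq [IsProbabilityMeasure μ] {g h : Ω → ℝ}
    (hg : AEStronglyMeasurable g μ) (hg1 : ∀ x, |g x| ≤ 1) (hh : MemLp h 2 μ) :
    |∫ x, g x * h x ∂μ| ≤ √(∫ x, h x ^ 2 ∂μ) := by
  have hgh_le : ∀ x, |g x * h x| ≤ |h x| := fun x => by
    simpa [abs_mul] using mul_le_mul_of_nonneg_right (hg1 x) (abs_nonneg (h x))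
  have hgh : MemLp (fun x => g x * h x) 2 μ :=
    hh.of_le (hg.mul hh.1) (ae_of_all _ fun x => by simpa using hgh_le x)
  rw [← Real.sqrt_sq_eq_abs]
  refine Real.sqrt_le_sqrt ((sq_integral_le_integral_sq hgh).trans ?_)
  refine integral_mono hgh.integrable_sq hh.integrable_sq fun x => ?_
  simpa only [sq_abs] using pow_le_pow_left₀ (abs_nonneg _) (hgh_le x) 2

def jumpEnergy (μ : Measure Ω) (f : Ω → ℝ) (T : Ω → Ω) : ℝ :=
  ∫ x, (f (T x) - f x) ^ 2 ∂μ

lemma jumpEnergy_nonneg (f : Ω → ℝ) (T : Ω → Ω) : 0 ≤ jumpEnergy μ f T :=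
  integral_nonneg fun _ => sq_nonneg _

lemma jumpEnergy_comp_le {f : Ω → ℝ} {S T : Ω → Ω} (hf : MemLp f 2 μ)
    (hS : MeasurePreserving S μ μ) (hT : MeasurePreserving T μ μ) :
    jumpEnergy μ f (S ∘ T) ≤ 2 * (jumpEnergy μ f S + jumpEnergy μ f T) := by
  set a : Ω → ℝ := fun x => f (S x) - f x
  set b : Ω → ℝ := fun x => f (T x) - f x
  have ha : MemLp a 2 μ := (hf.comp_measurePreserving hS).sub hf
  have hb : MemLp b 2 μ := (hf.comp_measurePreserving hT).sub hf
  have haT : MemLp (fun x => a (T x)) 2 μ := ha.comp_measurePreserving hT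
  have haT_sq : ∫ x, a (T x) ^ 2 ∂μ = ∫ x, a x ^ 2 ∂μ := by
    have := integral_map hT.aemeasurable (f := fun x => a x ^ 2)
      (hT.map_eq ▸ ha.integrable_sq.aestronglyMeasurable)
    rwa [hT.map_eq, eq_comm] at this
  calc jumpEnergy μ f (S ∘ T) = ∫ x, (a (T x) + b x) ^ 2 ∂μ := by
        simp only [jumpEnergy, Function.comp_apply, a, b, sub_add_sub_cancel]
    _ ≤ ∫ x, 2 * (a (T x) ^ 2 + b x ^ 2) ∂μ :=
        integral_mono (haT.add hb).integrable_sq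
          ((haT.integrable_sq.add hb.integrable_sq).const_mul 2)
          fun x => by nlinarith [sq_nonneg (a (T x) - b x)]
    _ = 2 * (jumpEnergy μ f S + jumpEnergy μ f T) := by
        rw [integral_const_mul, integral_add haT.integrable_sq hb.integrable_sq, haT_sq]
        rfl

end L2

lemma sum_mul_eq_half_sum_mul_sub_neg {G : Type*} [InvolutiveNeg G] {B : Finset G}
    (hB : ∀ y ∈ B, -y ∈ B) {c : G → ℝ} (hc : ∀ y, c (-y) = -c y) (J : G → ℝ) :
    ∑ y ∈ B, c y * J y = (∑ y ∈ B, c y * (J y - J (-y))) / 2 := by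
  have hneg : ∑ y ∈ B, c y * J (-y) = -∑ y ∈ B, c y * J y := by
    rw [← Finset.sum_neg_distrib]
    exact Finset.sum_nbij' (-·) (-·) hB hB (fun y _ => neg_neg y) (fun y _ => neg_neg y)
      fun y _ => by simp [hc]
  simp only [mul_sub, Finset.sum_sub_distrib, hneg]
  ring

variable {d : ℕ}

lemma swap_eq_comp (u v : Zd d) (η : Cfg d) : swap u v η = η ∘ Equiv.swap u v := by
  funext x
  simp only [swap, Function.comp_apply, Equiv.swap_apply_def]
  split_ifs <;> rfl

lemma swap_neg_eq_swap_comp {y : Zd d} (hy : y ≠ 0) :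
    swap (-y) y = swap (-y) 0 ∘ swap 0 y ∘ swap (-y) 0 := by
  have hyy : y ≠ -y := fun h => hy <| funext fun i => by
    have := congrFun h i
    simp only [Pi.neg_apply] at this
    simp only [Pi.zero_apply]
    omega
  funext η
  simp only [Function.comp_apply, swap_eq_comp, Function.comp_assoc, ← Equiv.Perm.coe_mul]
  rw [Equiv.swap_comm (-y) 0, Equiv.swap_comm 0 y, Equiv.swap_mul_swap_mul_swap hy hyy]

namespace IsBernoulliProduct

variable {ρ : ℝ} {ν : Measure (Cfg d)}

theorem measurePreserving_comp_perm (hν : IsBernoulliProduct d ρ ν) (σ : Equiv.Perm (Zd d)) :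
    MeasurePreserving (fun η : Cfg d => η ∘ σ) ν ν := by
  have hσ : Measurable fun η : Cfg d => η ∘ σ := by fun_prop
  have := hν.1
  refine ⟨hσ, Measure.ext_of_pointCylinders fun S a => ?_⟩
  have hpre : (fun η : Cfg d => η ∘ σ) ⁻¹' {η | ∀ z ∈ S, η z = a z}
      = {η | ∀ w ∈ S.map σ.toEmbedding, η w = (a ∘ σ.symm) w} := by
    ext η
    simp only [Set.mem_preimage, Set.mem_ofPred_eq, Finset.forall_mem_map, Function.comp_apply,
      Equiv.coe_toEmbedding, Equiv.symm_apply_apply]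
  rw [Measure.map_apply hσ (measurableSet_setOf_forall_eq S a), hpre, hν.2, hν.2,
    Finset.prod_map]
  simp

theorem measurePreserving_swap (hν : IsBernoulliProduct d ρ ν) (u v : Zd d) :
    MeasurePreserving (swap u v) ν ν := by
  simpa only [funext (swap_eq_comp u v)] using hν.measurePreserving_comp_perm (Equiv.swap u v)

theorem integral_comp_swap (hν : IsBernoulliProduct d ρ ν) (u v : Zd d) (g : Cfg d → ℝ) :
    ∫ η, g (swap u v η) ∂ν = ∫ η, g η ∂ν := by
  simpa only [swap_eq_comp] using
    (hν.measurePreserving_comp_perm (Equiv.swap u v)).integral_comp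
      (measurableEmbedding_comp_perm _) g

end IsBernoulliProduct

lemma measurable_ind_mul_ind (x y : Zd d) : Measurable fun η : Cfg d => ind (η x) * ind (η y) :=
  ((measurable_from_top (f := ind)).comp (measurable_pi_apply x)).mul
    ((measurable_from_top (f := ind)).comp (measurable_pi_apply y))

lemma abs_ind_mul_ind_le_one (a b : Bool) : |ind a * ind b| ≤ 1 := by
  cases a <;> cases b <;> simp [ind]

lemma integral_sum_mul_ind_mul_ind {ν : Measure (Cfg d)} {f : Cfg d → ℝ} (hf : Integrable f ν)
    (B : Finset (Zd d)) (c : Zd d → ℝ) :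
    ∫ η, (∑ y ∈ B, c y * (ind (η 0) * ind (η y))) * f η ∂ν
      = ∑ y ∈ B, c y * ∫ η, ind (η 0) * ind (η y) * f η ∂ν := by
  have hint : ∀ y, Integrable (fun η => ind (η 0) * ind (η y) * f η) ν := fun y =>
    hf.bdd_mul (measurable_ind_mul_ind 0 y).aestronglyMeasurable
      (ae_of_all _ fun η => abs_ind_mul_ind_le_one _ _)
  simp_rw [Finset.sum_mul, mul_assoc (c _)]
  rw [integral_finsetSum B fun y _ => (hint y).const_mul (c y)]
  simp_rw [integral_const_mul]

lemma apply_swap_eq_of_notMem {f : Cfg d → ℝ} {Λ : Finset (Zd d)}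
    (hΛ : ∀ η η' : Cfg d, (∀ x ∈ Λ, η x = η' x) → f η = f η') {u v : Zd d} (hu : u ∉ Λ)
    (hv : v ∉ Λ) (η : Cfg d) : f (swap u v η) = f η :=
  hΛ _ _ fun x hx => by
    simp only [swap, if_neg (ne_of_mem_of_not_mem hx hu), if_neg (ne_of_mem_of_not_mem hx hv)]

def exclusionDirichletForm (p : Zd d → ℝ) (ν : Measure (Cfg d)) (f : Cfg d → ℝ) : ℝ :=
  (1 / 2) * ∑' uv : Zd d × Zd d, p (uv.2 - uv.1) * jumpEnergy ν f (swap uv.1 uv.2)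

open scoped Pointwise in
lemma IsCylinder.summable_jumpEnergy {f : Cfg d → ℝ} (hf : IsCylinder f) {B : Finset (Zd d)}
    {p : Zd d → ℝ} (hpB : ∀ x ∉ B, p x = 0) (ν : Measure (Cfg d)) :
    Summable fun uv : Zd d × Zd d => p (uv.2 - uv.1) * jumpEnergy ν f (swap uv.1 uv.2) := by
  classical
  obtain ⟨Λ, hΛ⟩ := hf
  refine summable_of_ne_finset_zero (s := (Λ ∪ (Λ - B)) ×ˢ (Λ ∪ (Λ + B))) ?_
  rintro ⟨u, v⟩ huv
  by_cases hvu : v - u ∈ B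
  · have hu : u ∉ Λ := fun hu => huv <| Finset.mem_product.2
      ⟨Finset.mem_union_left _ hu,
        Finset.mem_union_right _ (by simpa using Finset.add_mem_add hu hvu)⟩
    have hv : v ∉ Λ := fun hv => huv <| Finset.mem_product.2
      ⟨Finset.mem_union_right _ (by simpa using Finset.sub_mem_sub hv hvu),
        Finset.mem_union_left _ hv⟩
    simp [jumpEnergy, apply_swap_eq_of_notMem hΛ hu hv]
  · simp [hpB _ hvu]

lemma mul_jumpEnergy_swap_le {f : Cfg d → ℝ} (hf : IsCylinder f) {B : Finset (Zd d)}
    {p : Zd d → ℝ} (hp : ∀ x, 0 ≤ p x) (hpB : ∀ x ∉ B, p x = 0) (ν : Measure (Cfg d))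
    (u v : Zd d) :
    p (v - u) * jumpEnergy ν f (swap u v) ≤ 2 * exclusionDirichletForm p ν f := by
  rw [exclusionDirichletForm, ← mul_assoc, mul_one_div_cancel two_ne_zero, one_mul]
  exact (hf.summable_jumpEnergy hpB ν).le_tsum (u, v) fun uv _ =>
    mul_nonneg (hp _) (jumpEnergy_nonneg _ _)

namespace IsBernoulliProduct

variable {ρ : ℝ} {ν : Measure (Cfg d)} {f : Cfg d → ℝ}

theorem integral_ind_mul_ind_neg_sub (hν : IsBernoulliProduct d ρ ν) (hf : Integrable f ν)
    {y : Zd d} (hy : y ≠ 0) :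
    ∫ η, ind (η 0) * ind (η (-y)) * f η ∂ν - ∫ η, ind (η 0) * ind (η y) * f η ∂ν
      = ∫ η, ind (η 0) * ind (η y) * (f (swap (-y) y η) - f η) ∂ν := by
  have hint : ∀ g : Cfg d → ℝ, Integrable g ν →
      Integrable (fun η => ind (η 0) * ind (η y) * g η) ν := fun g hg =>
    hg.bdd_mul (measurable_ind_mul_ind 0 y).aestronglyMeasurable
      (ae_of_all _ fun η => abs_ind_mul_ind_le_one _ _)
  have hswap_zero : ∀ η, swap (-y) y η 0 = η 0 := fun η => by
    simp [swap, (neg_ne_zero.2 hy).symm, hy.symm]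
  have hswap_neg : ∀ η, swap (-y) y η (-y) = η y := fun η => by simp [swap]
  have hf_swap : Integrable (fun η => f (swap (-y) y η)) ν :=
    (hν.measurePreserving_swap (-y) y).integrable_comp_of_integrable hf
  rw [← hν.integral_comp_swap (-y) y]
  simp only [hswap_zero, hswap_neg, mul_sub]
  exact (integral_sub (hint _ hf_swap) (hint f hf)).symm

theorem mul_jumpEnergy_swap_neg_le (hν : IsBernoulliProduct d ρ ν) (hf : MemLp f 2 ν)
    (hcyl : IsCylinder f) {B : Finset (Zd d)} {p : Zd d → ℝ} (hp : ∀ x, 0 ≤ p x)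
    (hpB : ∀ x ∉ B, p x = 0) {y : Zd d} (hy : y ≠ 0) :
    p y * jumpEnergy ν f (swap (-y) y) ≤ 20 * exclusionDirichletForm p ν f := by
  have hmp := hν.measurePreserving_swap
  have hlong : jumpEnergy ν f (swap (-y) y)
      ≤ 6 * jumpEnergy ν f (swap (-y) 0) + 4 * jumpEnergy ν f (swap 0 y) := by
    rw [swap_neg_eq_swap_comp hy]
    have h1 := jumpEnergy_comp_le hf (hmp (-y) 0) ((hmp 0 y).comp (hmp (-y) 0))
    have h2 := jumpEnergy_comp_le hf (hmp 0 y) (hmp (-y) 0)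
    linarith
  have hA := mul_jumpEnergy_swap_le hcyl hp hpB ν (-y) 0
  have hB := mul_jumpEnergy_swap_le hcyl hp hpB ν 0 y
  rw [zero_sub, neg_neg] at hA
  rw [sub_zero] at hB
  nlinarith [hp y]

theorem abs_integral_ind_mul_ind_neg_sub_le (hν : IsBernoulliProduct d ρ ν) (hf : MemLp f 2 ν)
    (hcyl : IsCylinder f) {B : Finset (Zd d)} {p : Zd d → ℝ} (hp : ∀ x, 0 ≤ p x)
    (hpB : ∀ x ∉ B, p x = 0) {y : Zd d} (hy : y ≠ 0) (hpy : 0 < p y) :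
    |∫ η, ind (η 0) * ind (η (-y)) * f η ∂ν - ∫ η, ind (η 0) * ind (η y) * f η ∂ν|
      ≤ √(20 / p y) * √(exclusionDirichletForm p ν f) := by
  have := hν.1
  have hf_swap := (hf.comp_measurePreserving (hν.measurePreserving_swap (-y) y)).sub hf
  rw [hν.integral_ind_mul_ind_neg_sub (hf.integrable one_le_two) hy,
    ← Real.sqrt_mul (by positivity)]
  calc _ ≤ √(jumpEnergy ν f (swap (-y) y)) :=
        abs_integral_mul_le_sqrt_integral_sq (measurable_ind_mul_ind 0 y).aestronglyMeasurable
          (fun η => abs_ind_mul_ind_le_one _ _) hf_swap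
    _ ≤ √(20 / p y * exclusionDirichletForm p ν f) := by
        refine Real.sqrt_le_sqrt ?_
        rw [div_mul_eq_mul_div, le_div_iff₀ hpy, mul_comm]
        exact hν.mul_jumpEnergy_swap_neg_le hf hcyl hp hpB hy

end IsBernoulliProduct

theorem stmt_10_general (d R : ℕ) (ρ : ℝ)
    (ν : Measure (Cfg d)) (hν : IsBernoulliProduct d ρ ν)
    (B : Finset (Zd d)) (hB : ∀ y : Zd d, y ∈ B ↔ y ≠ 0 ∧ l1 y ≤ R)
    (p : Zd d → ℝ) (hp01 : ∀ x, p x ∈ Set.Icc (0:ℝ) 1)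
    (hpsupp : ∀ x, 0 < p x ↔ (x ≠ 0 ∧ l1 x ≤ R))
    (l : Fin d → ℝ) :
    ∃ K : ℝ, 0 < K ∧
      ∀ f : Cfg d → ℝ, Measurable f → (∃ Cf : ℝ, ∀ η, |f η| ≤ Cf) → IsCylinder f →
        |∫ η, (∑ y ∈ B, (∑ i, (y i : ℝ) * l i) * (ind (η 0) * ind (η y))) * f η ∂ν|
          ≤ K * Real.sqrt ((1/2) * ∑' uv : Zd d × Zd d,
              p (uv.2 - uv.1) * ∫ η, (f (swap uv.1 uv.2 η) - f η)^2 ∂ν) := by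
  have hp : ∀ x, 0 ≤ p x := fun x => (hp01 x).1
  have hpB : ∀ x ∉ B, p x = 0 := fun x hx =>
    le_antisymm (not_lt.1 fun h => hx ((hB x).2 ((hpsupp x).1 h))) (hp x)
  have hBneg : ∀ y ∈ B, -y ∈ B := fun y hy => by
    rw [hB] at hy ⊢
    simpa [l1] using hy
  have hc : ∀ y : Zd d, ∑ i, ((-y) i : ℝ) * l i = -∑ i, (y i : ℝ) * l i := fun y => by
    simp [Finset.sum_neg_distrib]
  refine ⟨1 + ∑ y ∈ B, |∑ i, (y i : ℝ) * l i| * √(20 / p y), by positivity, ?_⟩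
  rintro f hfm ⟨C, hC⟩ hcyl
  have := hν.1
  have hf : MemLp f 2 ν := MemLp.of_bound hfm.aestronglyMeasurable C (ae_of_all _ hC)
  change _ ≤ _ * √(exclusionDirichletForm p ν f)
  rw [integral_sum_mul_ind_mul_ind (hf.integrable one_le_two),
    sum_mul_eq_half_sum_mul_sub_neg hBneg hc]
  set D := exclusionDirichletForm p ν f
  have hsum : |∑ y ∈ B, (∑ i, (y i : ℝ) * l i) * (∫ η, ind (η 0) * ind (η y) * f η ∂ν
      - ∫ η, ind (η 0) * ind (η (-y)) * f η ∂ν)|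
      ≤ (∑ y ∈ B, |∑ i, (y i : ℝ) * l i| * √(20 / p y)) * √D := by
    rw [Finset.sum_mul]
    refine (Finset.abs_sum_le_sum_abs _ _).trans (Finset.sum_le_sum fun y hy => ?_)
    rw [abs_mul, abs_sub_comm, mul_assoc]
    exact mul_le_mul_of_nonneg_left (hν.abs_integral_ind_mul_ind_neg_sub_le hf hcyl hp hpB
      ((hB y).1 hy).1 ((hpsupp y).2 ((hB y).1 hy))) (abs_nonneg _)
  have hK : 0 ≤ (∑ y ∈ B, |∑ i, (y i : ℝ) * l i| * √(20 / p y)) * √D := by positivity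
  rw [abs_div, abs_two, add_mul, one_mul]
  linarith [Real.sqrt_nonneg D]

/-- the key estimate: there is `K > 0`, depending only on
`d, R, l, ρ` and the kernel `p`, with `|⟨φ·l, f⟩_{ν_ρ}| ≤ K · D_se(f)^{1/2}`
for all bounded measurable local `f`. -/
theorem stmt_10 (d R : ℕ) (hd : 0 < d) (hR : 1 ≤ R) (ρ : ℝ) (hρ : ρ ∈ Set.Icc (0:ℝ) 1)
    (ν : Measure (Cfg d)) (hν : IsBernoulliProduct d ρ ν)
    (B : Finset (Zd d)) (hB : ∀ y : Zd d, y ∈ B ↔ y ≠ 0 ∧ l1 y ≤ R)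
    (p : Zd d → ℝ) (hp01 : ∀ x, p x ∈ Set.Icc (0:ℝ) 1)
    (hpsym : ∀ x, p (-x) = p x)
    (hpsupp : ∀ x, 0 < p x ↔ (x ≠ 0 ∧ l1 x ≤ R))
    (hpsum : ∑ x ∈ B, p x = 1)
    (l : Fin d → ℝ) :
    ∃ K : ℝ, 0 < K ∧
      ∀ f : Cfg d → ℝ, Measurable f → (∃ Cf : ℝ, ∀ η, |f η| ≤ Cf) → IsCylinder f →
        |∫ η, (∑ y ∈ B, (∑ i, (y i : ℝ) * l i) * (ind (η 0) * ind (η y))) * f η ∂ν|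
          ≤ K * Real.sqrt ((1/2) * ∑' uv : Zd d × Zd d,
              p (uv.2 - uv.1) * ∫ η, (f (swap uv.1 uv.2 η) - f η)^2 ∂ν) :=
  stmt_10_general d R ρ ν hν B hB p hp01 hpsupp l

end SEPRC
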